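/- arXiv:1909.03324 — 4 statements merged into one kernel-verified Lean document; each statement's English description precedes it below -/
import Mathlib

section
/- Let N and K be integers with 1 ≤ N ≤ K and let M be a real number with 1 − N/K ≤ M ≤ 1 − 1/K. Then R^MN(N, N·K, M) = (N/K + M)·R^MN(N, K, M), and moreover N/K + M ≤ 2, so R^MN(N, N·K, M) ≤ 2·R^MN(N, K, M) on this range. -/
/-- The Maddah-Ali–Niesen rate function for `n` files, `k` users, and cache memory `M`. -/
noncomputable def RMN (n k : ℕ) (M : ℝ) : ℝ :=
  (k : ℝ) * (1 - M / n) * min (1 / (1 + (k : ℝ) * M / n)) ((n : ℝ) / k)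

theorem case2_rate_ratio (N K : ℕ) (hN : 1 ≤ N) (hNK : N ≤ K)
    (M : ℝ) (hM0 : 1 - (N : ℝ) / K ≤ M) (hM1 : M ≤ 1 - 1 / (K : ℝ)) :
    RMN N (N * K) M = ((N : ℝ) / K + M) * RMN N K M ∧ (N : ℝ) / K + M ≤ 2 ∧
      RMN N (N * K) M ≤ 2 * RMN N K M := by
  have hN1 : (1:ℝ) ≤ N := by exact_mod_cast hN
  have hK1 : (1:ℝ) ≤ K := by exact_mod_cast le_trans hN hNK
  have hNK' : (N:ℝ) ≤ K := by exact_mod_cast hNK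
  have hNpos : (0:ℝ) < N := by linarith
  have hKpos : (0:ℝ) < K := by linarith
  have hM0' : (0:ℝ) ≤ M := by
    have h : (N:ℝ)/K ≤ 1 := by rw [div_le_one hKpos]; exact hNK'
    linarith
  have hMN : M < (N:ℝ) := by
    have h1K : 0 < 1 / (K:ℝ) := by positivity
    linarith
  have hKM : (K:ℝ) * M ≤ K - 1 := by
    nlinarith [mul_le_mul_of_nonneg_left hM1 hKpos.le, mul_one_div_cancel hKpos.ne']
  have hKM2 : (K:ℝ) ≤ N + K * M := by
    have h := mul_le_mul_of_nonneg_left hM0 hKpos.le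
    have h2 : (K:ℝ) * ((N:ℝ)/K) = N := by field_simp
    nlinarith
  have hden : (0:ℝ) < N + K * M := by linarith
  have e1 : RMN N (N*K) M = (N:ℝ) - M := by
    unfold RMN
    push_cast
    have h1 : (N:ℝ)*K*M/N = K*M := by field_simp
    have h2 : (N:ℝ)/((N:ℝ)*K) = 1/K := by
      rw [div_eq_div_iff (by positivity) hKpos.ne']; ring
    rw [h1, h2, min_eq_right]
    · field_simp
    · apply one_div_le_one_div_of_le (by positivity)
      linarith
  have e2 : RMN N K M = (K:ℝ) * ((N:ℝ) - M) / ((N:ℝ) + K * M) := by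
    unfold RMN
    have h1 : 1 + (K:ℝ)*M/N = ((N:ℝ) + K*M)/N := by field_simp
    rw [h1, one_div_div, min_eq_left]
    · field_simp
    · rw [div_le_div_iff₀ hden hKpos]
      nlinarith
  have heq : RMN N (N*K) M = ((N:ℝ)/K + M) * RMN N K M := by
    rw [e1, e2]
    field_simp
  refine ⟨heq, ?_, ?_⟩
  · have h : (N:ℝ)/K ≤ 1 := by rw [div_le_one hKpos]; exact hNK'
    have h1K : 0 < 1 / (K:ℝ) := by positivity
    linarith
  · have hR : 0 ≤ RMN N K M := by
      rw [e2]
      apply div_nonneg _ hden.le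
      nlinarith
    have h : (N:ℝ)/K + M ≤ 2 := by
      have h' : (N:ℝ)/K ≤ 1 := by rw [div_le_one hKpos]; exact hNK'
      have h1K : 0 < 1 / (K:ℝ) := by positivity
      linarith
    rw [heq]
    nlinarith
end

section
/- Let N and K be integers with 1 ≤ N ≤ K. Then for every real number M with 0 ≤ M ≤ N, one has R^MN(N, N·K, M) ≤ 2·R^MN(N, K, M). -/
lemma aux (n k M : ℝ) (hn : 1 ≤ n) (hk : n ≤ k) (hM0 : 0 ≤ M) (hMn : M ≤ n) :
    n * k * (1 - M / n) * min (1 / (1 + n * k * M / n)) (n / (n * k)) ≤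
      2 * (k * (1 - M / n) * min (1 / (1 + k * M / n)) (n / k)) := by
  have hn0 : 0 < n := by linarith
  have hk0 : 0 < k := by linarith
  have hc : 0 ≤ 1 - M / n := by
    rw [sub_nonneg, div_le_one hn0]; exact hMn
  have en : n * k * M / n = k * M := by field_simp
  have h1 : 0 < 1 + n * k * M / n := by rw [en]; positivity
  have h2 : 0 < 1 + k * M / n := by positivity
  have hd : k * M / n * n = k * M := div_mul_cancel₀ _ hn0.ne'
  rcases le_total (1 / (1 + k * M / n)) (n / k) with hR | hR
  · rw [min_eq_left hR]
    rcases le_or_gt n (2 + k * M) with h | h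
    · calc n * k * (1 - M / n) * min (1 / (1 + n * k * M / n)) (n / (n * k))
          ≤ n * k * (1 - M / n) * (1 / (1 + n * k * M / n)) := by
            apply mul_le_mul_of_nonneg_left (min_le_left _ _) (by positivity)
        _ ≤ 2 * (k * (1 - M / n) * (1 / (1 + k * M / n))) := by
            rw [en, mul_one_div, mul_one_div, ← mul_div_assoc, div_le_div_iff₀ (by rw [en] at h1; exact h1) h2]
            have key : 0 ≤ (1 - M / n) * (k * (2 + k * M - n)) := by
              apply mul_nonneg hc
              apply mul_nonneg hk0.le
              linarith
            have e2 : n * k * (1 - M / n) * (1 + k * M / n)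
                = k * (1 - M / n) * (n + k * M) := by field_simp
            rw [e2]
            nlinarith [key]
    · calc n * k * (1 - M / n) * min (1 / (1 + n * k * M / n)) (n / (n * k))
          ≤ n * k * (1 - M / n) * (n / (n * k)) := by
            apply mul_le_mul_of_nonneg_left (min_le_right _ _) (by positivity)
        _ = n * (1 - M / n) := by field_simp
        _ ≤ 2 * (k * (1 - M / n) * (1 / (1 + k * M / n))) := by
            rw [mul_one_div, ← mul_div_assoc, le_div_iff₀ h2]
            have e3 : n * (1 - M / n) * (1 + k * M / n)
                = (1 - M / n) * (n + k * M) := by field_simp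
            rw [e3]
            nlinarith [mul_nonneg hc (show (0:ℝ) ≤ 2 * k - n - k * M by linarith)]
  · rw [min_eq_right hR]
    calc n * k * (1 - M / n) * min (1 / (1 + n * k * M / n)) (n / (n * k))
        ≤ n * k * (1 - M / n) * (n / (n * k)) := by
          apply mul_le_mul_of_nonneg_left (min_le_right _ _) (by positivity)
      _ = n * (1 - M / n) := by field_simp
      _ ≤ 2 * (k * (1 - M / n) * (n / k)) := by
          have : k * (1 - M / n) * (n / k) = n * (1 - M / n) := by field_simp
          rw [this]
          nlinarith [mul_nonneg hn0.le hc]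

theorem rate_NK_le_two_rate_K (N K : ℕ) (hN : 1 ≤ N) (hNK : N ≤ K) :
    ∀ M : ℝ, 0 ≤ M → M ≤ N → RMN N (N * K) M ≤ 2 * RMN N K M := by
  intro M hM0 hMN
  have hn : (1:ℝ) ≤ N := by exact_mod_cast hN
  have hk : (N:ℝ) ≤ K := by exact_mod_cast hNK
  unfold RMN
  push_cast
  exact aux N K M hn hk hM0 hMN
end

section
/- Let N and K be integers with 1 ≤ N ≤ K. Then the function M ↦ R^MN(N, K, M) is antitone (monotonically non-increasing) on the interval [0, N]. -/
theorem RMN_antitoneOn (N K : ℕ) (hN : 1 ≤ N) (hNK : N ≤ K) :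
    AntitoneOn (fun M : ℝ => RMN N K M) (Set.Icc 0 (N : ℝ)) := by
  have hn : (0:ℝ) < N := by exact_mod_cast Nat.lt_of_lt_of_le Nat.zero_lt_one hN
  have hk : (0:ℝ) < K := by
    exact_mod_cast Nat.lt_of_lt_of_le Nat.zero_lt_one (le_trans hN hNK)
  intro a ha b hb hab
  simp only [RMN]
  have ha0 : 0 ≤ a := ha.1
  have hbN : b ≤ N := hb.2
  have hfa : 0 ≤ (K:ℝ) * (1 - b / N) := by
    have : b / N ≤ 1 := by
      rw [div_le_one hn]; exact hbN
    nlinarith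
  have hf : (K:ℝ) * (1 - b / N) ≤ (K:ℝ) * (1 - a / N) := by
    have : a / N ≤ b / N := by
      gcongr
    nlinarith
  have hda : (0:ℝ) < 1 + (K:ℝ) * a / N := by
    have : 0 ≤ (K:ℝ) * a / N := by positivity
    linarith
  have hdb : (0:ℝ) < 1 + (K:ℝ) * b / N := by
    have h0b : 0 ≤ b := le_trans ha0 hab
    have : 0 ≤ (K:ℝ) * b / N := by positivity
    linarith
  have hg : min (1 / (1 + (K:ℝ) * b / N)) ((N:ℝ) / K)
      ≤ min (1 / (1 + (K:ℝ) * a / N)) ((N:ℝ) / K) := by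
    apply min_le_min _ le_rfl
    apply one_div_le_one_div_of_le hda
    have : (K:ℝ) * a / N ≤ (K:ℝ) * b / N := by
      gcongr
    linarith
  have hg0 : 0 ≤ min (1 / (1 + (K:ℝ) * b / N)) ((N:ℝ) / K) := by
    apply le_min
    · positivity
    · positivity
  have hfg : 0 ≤ (K:ℝ) * (1 - a / N) := le_trans hfa hf
  exact mul_le_mul hf hg hg0 hfg
end

section
/- Let N and K be positive integers and let r2 be an integer with 1 ≤ r2 ≤ K, and set r1 = N·r2. Then, as integers, (r2 + 1)·( C(N·K, r1+1) − C(N·K − N, r1+1) ) ≤ 2·(K − r2)·C(N·K, r1), where C(n,m) denotes the binomial coefficient n choose m (equal to 0 when m > n). -/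
theorem private_rate_le_two_YMA (N K : ℕ) (hN : 0 < N) (hK : 0 < K)
    (r2 : ℕ) (hr2 : 1 ≤ r2) (hr2K : r2 ≤ K) (r1 : ℕ) (hr1 : r1 = N * r2) :
    ((r2 : ℤ) + 1) * ((Nat.choose (N * K) (r1 + 1) : ℤ) - (Nat.choose (N * K - N) (r1 + 1) : ℤ))
      ≤ 2 * ((K : ℤ) - (r2 : ℤ)) * (Nat.choose (N * K) r1 : ℤ) := by
  have key : Nat.choose (N * K) (r1 + 1) * (r1 + 1)
      = Nat.choose (N * K) r1 * (N * (K - r2)) := by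
    rw [Nat.choose_succ_right_eq, hr1]
    congr 1
    exact (Nat.mul_sub N K r2).symm
  -- main natural-number inequality
  have hmain : (r2 + 1) * Nat.choose (N * K) (r1 + 1)
      ≤ 2 * (K - r2) * Nat.choose (N * K) r1 := by
    have hpos : 0 < r1 + 1 := Nat.succ_pos _
    refine Nat.le_of_mul_le_mul_right ?_ hpos
    have hN2 : (r2 + 1) * N ≤ 2 * (r1 + 1) := by
      subst hr1; nlinarith
    calc (r2 + 1) * Nat.choose (N * K) (r1 + 1) * (r1 + 1)
        = (r2 + 1) * (Nat.choose (N * K) (r1 + 1) * (r1 + 1)) := by ring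
      _ = ((r2 + 1) * N) * (Nat.choose (N * K) r1 * (K - r2)) := by rw [key]; ring
      _ ≤ (2 * (r1 + 1)) * (Nat.choose (N * K) r1 * (K - r2)) :=
          Nat.mul_le_mul_right _ hN2
      _ = 2 * (K - r2) * Nat.choose (N * K) r1 * (r1 + 1) := by ring
  have hcast : ((K - r2 : ℕ) : ℤ) = (K : ℤ) - (r2 : ℤ) := by
    exact Nat.cast_sub hr2K
  have h1 : ((r2 : ℤ) + 1) * (Nat.choose (N * K) (r1 + 1) : ℤ)
      ≤ 2 * ((K : ℤ) - (r2 : ℤ)) * (Nat.choose (N * K) r1 : ℤ) := by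
    have := hmain
    zify at this
    rw [hcast] at this
    linarith
  have h2 : (0 : ℤ) ≤ (Nat.choose (N * K - N) (r1 + 1) : ℤ) := by positivity
  nlinarith [h1, h2]
end
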